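/- arXiv:1910.09033 — 2 statements merged into one kernel-verified Lean document; each statement's English description precedes it below -/
import Mathlib

section
/- The fiber of the Lagrangian L_Σ over a point is exactly the equator circle {J_θ}: a matrix J ∈ M₄(ℝ) is a positively oriented compatible complex structure mapping span(e₁,e₂) into span(e₃,e₄) if and only if J = cos θ · Q + sin θ · R for some θ ∈ ℝ; equivalently, the set of such J equals {a·Q + b·R : a,b ∈ ℝ, a² + b² = 1}. -/
open Matrix

noncomputable def Jmat (θ : ℝ) : Matrix (Fin 4) (Fin 4) ℝ :=
  !![0, 0, -Real.cos θ, -Real.sin θ;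
     0, 0, -Real.sin θ, Real.cos θ;
     Real.cos θ, Real.sin θ, 0, 0;
     Real.sin θ, -Real.cos θ, 0, 0]

noncomputable def Qmat : Matrix (Fin 4) (Fin 4) ℝ := Jmat 0

noncomputable def Rmat : Matrix (Fin 4) (Fin 4) ℝ := Jmat (Real.pi / 2)

noncomputable def Pf (A : Matrix (Fin 4) (Fin 4) ℝ) : ℝ :=
  A 0 1 * A 2 3 - A 0 2 * A 1 3 + A 0 3 * A 1 2

noncomputable def e (i : Fin 4) : Fin 4 → ℝ := Pi.single i 1

/-- The condition that `J` is a positively oriented compatible complex structure on `ℝ⁴`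
mapping `span(e₁,e₂)` into `span(e₃,e₄)`. -/
def IsEquatorStructure (J : Matrix (Fin 4) (Fin 4) ℝ) : Prop :=
  J * J = -1 ∧ Jᵀ = -J ∧ Pf J = 1 ∧
    Submodule.map J.mulVecLin (Submodule.span ℝ {e 0, e 1}) ≤ Submodule.span ℝ {e 2, e 3}

/-!
Skew-symmetry and `J (span (e₁, e₂)) ⊆ span (e₃, e₄)` leave `J = [[0, -Bᵀ], [B, D]]` with
`B = [[a, c], [b, d]]` and `D = [[0, -f], [f, 0]]`. The first row of `J² = -1` reads
`a² + b² = 1`, `ac + bd = 0`, `af = bf = 0`, and `Pf J = bc - ad = 1`; hence `f = 0` and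
`(c, d) = (b, -a)`, i.e. `J = a Q + b R`. The angle `θ` is the argument of `a + b i`.
-/

theorem Real.exists_cos_eq_sin_eq {a b : ℝ} (h : a ^ 2 + b ^ 2 = 1) :
    ∃ θ : ℝ, Real.cos θ = a ∧ Real.sin θ = b := by
  have hnorm : ‖(⟨a, b⟩ : ℂ)‖ = 1 := by
    rw [Complex.norm_def, Complex.normSq_mk, ← sq, ← sq, h, Real.sqrt_one]
  have hne : (⟨a, b⟩ : ℂ) ≠ 0 := by
    rintro h0
    simp [h0] at hnorm
  exact ⟨Complex.arg ⟨a, b⟩, by rw [Complex.cos_arg hne, hnorm, div_one],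
    by rw [Complex.sin_arg, hnorm, div_one]⟩

def zeroBlockSkew (a b c d f : ℝ) : Matrix (Fin 4) (Fin 4) ℝ :=
  !![0, 0, -a, -b; 0, 0, -c, -d; a, c, 0, -f; b, d, f, 0]

lemma smul_Qmat_add_smul_Rmat (a b : ℝ) :
    a • Qmat + b • Rmat = zeroBlockSkew a b b (-a) 0 := by
  ext i j
  fin_cases i <;> fin_cases j <;> simp [Qmat, Rmat, Jmat, zeroBlockSkew]

lemma mem_span_e_two_e_three_iff {v : Fin 4 → ℝ} :
    v ∈ Submodule.span ℝ {e 2, e 3} ↔ v 0 = 0 ∧ v 1 = 0 := by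
  rw [Submodule.mem_span_pair]
  constructor
  · rintro ⟨a, b, rfl⟩
    simp [e]
  · rintro ⟨h0, h1⟩
    refine ⟨v 2, v 3, funext fun i => ?_⟩
    fin_cases i <;> simp [e, h0, h1]

lemma map_mulVecLin_span_le_iff {J : Matrix (Fin 4) (Fin 4) ℝ} :
    Submodule.map J.mulVecLin (Submodule.span ℝ {e 0, e 1}) ≤ Submodule.span ℝ {e 2, e 3} ↔
      J 0 0 = 0 ∧ J 1 0 = 0 ∧ J 0 1 = 0 ∧ J 1 1 = 0 := by
  simp only [Submodule.map_le_iff_le_comap, Submodule.span_le, Set.insert_subset_iff,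
    Set.singleton_subset_iff, SetLike.mem_coe, Submodule.mem_comap, Matrix.mulVecLin_apply,
    mem_span_e_two_e_three_iff]
  simp [e, and_assoc]

lemma exists_eq_zeroBlockSkew {J : Matrix (Fin 4) (Fin 4) ℝ} (hskew : Jᵀ = -J)
    (h00 : J 0 0 = 0) (h10 : J 1 0 = 0) (h01 : J 0 1 = 0) (h11 : J 1 1 = 0) :
    ∃ a b c d f, J = zeroBlockSkew a b c d f := by
  have hT : ∀ i j, J i j = -J j i := fun i j => by
    simpa using congrFun₂ hskew j i
  refine ⟨J 2 0, J 3 0, J 2 1, J 3 1, J 3 2, ?_⟩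
  ext i j
  fin_cases i <;> fin_cases j <;> simp [zeroBlockSkew, h00, h10, h01, h11] <;>
    linarith [hT 2 2, hT 3 3, hT 0 2, hT 0 3, hT 1 2, hT 1 3, hT 2 3]

lemma zeroBlockSkew_entries_of_mul_self_eq_neg_one_of_pf_eq_one {a b c d f : ℝ}
    (hsq : zeroBlockSkew a b c d f * zeroBlockSkew a b c d f = -1)
    (hpf : Pf (zeroBlockSkew a b c d f) = 1) :
    a ^ 2 + b ^ 2 = 1 ∧ c = b ∧ d = -a ∧ f = 0 := by
  have e00 := congrFun₂ hsq 0 0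
  have e01 := congrFun₂ hsq 0 1
  have e02 := congrFun₂ hsq 0 2
  have e03 := congrFun₂ hsq 0 3
  simp [zeroBlockSkew, Matrix.mul_apply, Fin.sum_univ_four, -mul_eq_zero] at e00 e01 e02 e03
  simp [zeroBlockSkew, Pf] at hpf
  refine ⟨by linear_combination -e00, ?_, ?_, ?_⟩
  · linear_combination -a * e01 + b * hpf + c * e00
  · linear_combination -b * e01 - a * hpf + d * e00
  · linear_combination a * e03 + b * e02 + f * e00

lemma isEquatorStructure_smul_Qmat_add_smul_Rmat {a b : ℝ} (h : a ^ 2 + b ^ 2 = 1) :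
    IsEquatorStructure (a • Qmat + b • Rmat) := by
  rw [smul_Qmat_add_smul_Rmat]
  refine ⟨?_, ?_, ?_, map_mulVecLin_span_le_iff.mpr (by simp [zeroBlockSkew])⟩
  · ext i j
    fin_cases i <;> fin_cases j <;> simp [zeroBlockSkew, Matrix.mul_apply, Fin.sum_univ_four] <;>
      linarith
  · ext i j
    fin_cases i <;> fin_cases j <;> simp [zeroBlockSkew]
  · simp [zeroBlockSkew, Pf]
    linear_combination h

lemma isEquatorStructure_iff {J : Matrix (Fin 4) (Fin 4) ℝ} :
    IsEquatorStructure J ↔ ∃ a b : ℝ, a ^ 2 + b ^ 2 = 1 ∧ J = a • Qmat + b • Rmat := by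
  constructor
  · rintro ⟨hsq, hskew, hpf, hspan⟩
    obtain ⟨h00, h10, h01, h11⟩ := map_mulVecLin_span_le_iff.mp hspan
    obtain ⟨a, b, c, d, f, rfl⟩ := exists_eq_zeroBlockSkew hskew h00 h10 h01 h11
    obtain ⟨hab, hc, hd, hf⟩ := zeroBlockSkew_entries_of_mul_self_eq_neg_one_of_pf_eq_one hsq hpf
    exact ⟨a, b, hab, by rw [hc, hd, hf, smul_Qmat_add_smul_Rmat]⟩
  · rintro ⟨a, b, hab, rfl⟩
    exact isEquatorStructure_smul_Qmat_add_smul_Rmat hab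

/-- The fiber of the Lagrangian `L_Σ` over a point is exactly the equator circle `{J_θ}`:
a matrix `J` is a positively oriented compatible complex structure mapping `span(e₁,e₂)`
into `span(e₃,e₄)` iff `J = cos θ • Q + sin θ • R` for some `θ`; equivalently, the set of
such `J` equals `{a • Q + b • R : a² + b² = 1}`. -/
theorem equator_fiber_characterization :
    (∀ J : Matrix (Fin 4) (Fin 4) ℝ,
      IsEquatorStructure J ↔ ∃ θ : ℝ, J = Real.cos θ • Qmat + Real.sin θ • Rmat) ∧
    {J : Matrix (Fin 4) (Fin 4) ℝ | IsEquatorStructure J} =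
      {M : Matrix (Fin 4) (Fin 4) ℝ | ∃ a b : ℝ, a ^ 2 + b ^ 2 = 1 ∧ M = a • Qmat + b • Rmat} := by
  refine ⟨fun J => isEquatorStructure_iff.trans ⟨?_, ?_⟩, Set.ext fun J => isEquatorStructure_iff⟩
  · rintro ⟨a, b, hab, rfl⟩
    obtain ⟨θ, rfl, rfl⟩ := Real.exists_cos_eq_sin_eq hab
    exact ⟨θ, rfl⟩
  · rintro ⟨θ, rfl⟩
    exact ⟨_, _, Real.cos_sq_add_sin_sq θ, rfl⟩
end

section
/- The twistor fiber over a point of an oriented Riemannian 4-manifold is a 2-sphere: the set of positively oriented compatible complex structures on ℝ⁴, i.e. {J ∈ M₄(ℝ) : J² = −I, Jᵀ = −J, Pf(J) = 1}, equals the unit sphere {a·P + b·Q + c·R : a,b,c ∈ ℝ, a² + b² + c² = 1} in the span of the three matrices P, Q, R. -/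
/-!
A skew-symmetric `J` is determined by its six entries above the diagonal, and taking traces in
`J * J = -1` shows that their squares sum to `2`. The difference between this sum and `2 * Pf J`
is `(J₂₃ - J₀₁)² + (J₁₃ + J₀₂)² + (J₁₂ - J₀₃)²`, which vanishes exactly on the span of `P`, `Q`,
`R`; so `Pf J = 1` puts `J` in that span, where `Pf (a P + b Q + c R) = a² + b² + c²`.
Conversely `a P + b Q + c R` is skew and squares to `-(a² + b² + c²)`.
-/

open Matrix

/-- The matrix `P` with `P e₁ = e₂`, `P e₂ = −e₁`, `P e₃ = e₄`, `P e₄ = −e₃`. -/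
def Pmat : Matrix (Fin 4) (Fin 4) ℝ :=
  !![0, -1, 0, 0;
     1, 0, 0, 0;
     0, 0, 0, -1;
     0, 0, 1, 0]

def skewMat4 (p q r s t u : ℝ) : Matrix (Fin 4) (Fin 4) ℝ :=
  !![0, p, q, r;
     -p, 0, s, t;
     -q, -s, 0, u;
     -r, -t, -u, 0]

noncomputable def pqrComb (a b c : ℝ) : Matrix (Fin 4) (Fin 4) ℝ :=
  a • Pmat + b • Qmat + c • Rmat

lemma transpose_eq_neg_iff_exists_skewMat4 {J : Matrix (Fin 4) (Fin 4) ℝ} :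
    Jᵀ = -J ↔ ∃ p q r s t u, J = skewMat4 p q r s t u := by
  constructor
  · intro hJ
    have hskew (i j : Fin 4) : J j i = -J i j := by
      simpa using congrFun (congrFun hJ i) j
    refine ⟨J 0 1, J 0 2, J 0 3, J 1 2, J 1 3, J 2 3, ?_⟩
    ext i j
    fin_cases i <;> fin_cases j <;>
      simp only [skewMat4, of_apply, cons_val', cons_val_zero, cons_val_one, cons_val,
        cons_val_fin_one, Fin.isValue, Fin.reduceFinMk, Fin.zero_eta, Fin.mk_one] <;>
      first | exact hskew _ _ | linarith [hskew 0 0, hskew 1 1, hskew 2 2, hskew 3 3]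
  · rintro ⟨p, q, r, s, t, u, rfl⟩
    ext i j
    fin_cases i <;> fin_cases j <;> simp [skewMat4]

lemma Pf_skewMat4 (p q r s t u : ℝ) : Pf (skewMat4 p q r s t u) = p * u - q * t + r * s := by
  simp [Pf, skewMat4]

lemma trace_skewMat4_mul_self (p q r s t u : ℝ) :
    trace (skewMat4 p q r s t u * skewMat4 p q r s t u) =
      -2 * (p ^ 2 + q ^ 2 + r ^ 2 + s ^ 2 + t ^ 2 + u ^ 2) := by
  simp only [trace, diag_apply, mul_apply, Fin.sum_univ_four, skewMat4, of_apply, cons_val',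
    cons_val_zero, cons_val_one, cons_val, cons_val_fin_one, Fin.isValue]
  ring

lemma pqrComb_eq_skewMat4 (a b c : ℝ) :
    pqrComb a b c = skewMat4 (-a) (-b) (-c) (-c) b (-a) := by
  ext i j
  fin_cases i <;> fin_cases j <;> simp [pqrComb, skewMat4, Pmat, Qmat, Rmat, Jmat]

lemma pqrComb_mul_self (a b c : ℝ) :
    pqrComb a b c * pqrComb a b c = -(a ^ 2 + b ^ 2 + c ^ 2) • 1 := by
  rw [pqrComb_eq_skewMat4]
  ext i j
  fin_cases i <;> fin_cases j <;>
    simp only [skewMat4, mul_apply, Fin.sum_univ_four, Matrix.smul_apply, one_apply, smul_eq_mul,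
      Fin.reduceEq, ↓reduceIte, of_apply, cons_val', cons_val_zero, cons_val_one, cons_val,
      cons_val_fin_one, Fin.isValue, Fin.reduceFinMk, Fin.zero_eta, Fin.mk_one] <;>
    ring

lemma Pf_pqrComb (a b c : ℝ) : Pf (pqrComb a b c) = a ^ 2 + b ^ 2 + c ^ 2 := by
  rw [pqrComb_eq_skewMat4, Pf_skewMat4]
  ring

lemma eq_of_sum_sq_eq_two_mul {p q r s t u : ℝ}
    (h : p ^ 2 + q ^ 2 + r ^ 2 + s ^ 2 + t ^ 2 + u ^ 2 = 2 * (p * u - q * t + r * s)) :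
    s = r ∧ t = -q ∧ u = p := by
  have hsum : (s - r) ^ 2 + (t + q) ^ 2 + (u - p) ^ 2 = 0 := by linear_combination h
  have hs : (s - r) ^ 2 = 0 := by linarith [sq_nonneg (s - r), sq_nonneg (t + q), sq_nonneg (u - p)]
  have ht : (t + q) ^ 2 = 0 := by linarith [sq_nonneg (s - r), sq_nonneg (t + q), sq_nonneg (u - p)]
  have hu : (u - p) ^ 2 = 0 := by linarith [sq_nonneg (s - r), sq_nonneg (t + q), sq_nonneg (u - p)]
  simp only [pow_eq_zero_iff two_ne_zero, sub_eq_zero, add_eq_zero_iff_eq_neg] at hs ht hu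
  exact ⟨hs, ht, hu⟩

lemma exists_pqrComb_eq_of_skewMat4 {p q r s t u : ℝ}
    (hsq : skewMat4 p q r s t u * skewMat4 p q r s t u = -1)
    (hPf : Pf (skewMat4 p q r s t u) = 1) :
    ∃ a b c : ℝ, skewMat4 p q r s t u = pqrComb a b c := by
  have hnorm := congrArg trace hsq
  rw [trace_skewMat4_mul_self, trace_neg, trace_one, Fintype.card_fin, Nat.cast_ofNat] at hnorm
  rw [Pf_skewMat4] at hPf
  have hasd :
      p ^ 2 + q ^ 2 + r ^ 2 + s ^ 2 + t ^ 2 + u ^ 2 = 2 * (p * u - q * t + r * s) := by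
    linear_combination -hnorm / 2 - 2 * hPf
  obtain ⟨hs, ht, hu⟩ := eq_of_sum_sq_eq_two_mul hasd
  refine ⟨-p, -q, -r, ?_⟩
  rw [pqrComb_eq_skewMat4, hs, ht, hu]
  simp only [neg_neg]

/-- The twistor fiber is a 2-sphere: the set of positively oriented compatible complex
structures on `ℝ⁴` equals the unit sphere in the span of `P`, `Q`, `R`. -/
theorem twistor_fiber_is_sphere :
    {J : Matrix (Fin 4) (Fin 4) ℝ | J * J = -1 ∧ Jᵀ = -J ∧ Pf J = 1} =
      {M : Matrix (Fin 4) (Fin 4) ℝ |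
        ∃ a b c : ℝ, a ^ 2 + b ^ 2 + c ^ 2 = 1 ∧ M = a • Pmat + b • Qmat + c • Rmat} := by
  ext J
  constructor
  · rintro ⟨hsq, hskew, hPf⟩
    obtain ⟨p, q, r, s, t, u, rfl⟩ := transpose_eq_neg_iff_exists_skewMat4.1 hskew
    obtain ⟨a, b, c, hJ⟩ := exists_pqrComb_eq_of_skewMat4 hsq hPf
    rw [hJ, Pf_pqrComb] at hPf
    exact ⟨a, b, c, hPf, hJ⟩
  · rintro ⟨a, b, c, hnorm, rfl⟩
    refine ⟨?_, ?_, ?_⟩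
    · show pqrComb a b c * pqrComb a b c = -1
      rw [pqrComb_mul_self, hnorm, neg_smul, one_smul]
    · exact transpose_eq_neg_iff_exists_skewMat4.2 ⟨_, _, _, _, _, _, pqrComb_eq_skewMat4 ..⟩
    · exact (Pf_pqrComb a b c).trans hnorm
end
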